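/- Let G = (V, E) be a directed graph, w a strong articulation point of G, and let C₁, ..., C_t be the strongly connected components of G \ {w}. Then every 2-vertex-connected component of G is contained in C_i ∪ {w} for some i. -/

import Mathlib

variable {V : Type*}

/-- Reachability inside the induced subgraph on `S` of the digraph with edge relation `E`. -/
def ReachIn (E : V → V → Prop) (S : Set V) : V → V → Prop :=
  Relation.ReflTransGen (fun a b => a ∈ S ∧ b ∈ S ∧ E a b)

/-- The induced subgraph on `S` is strongly connected. -/
def SCOn (E : V → V → Prop) (S : Set V) : Prop :=
  ∀ u ∈ S, ∀ w ∈ S, ReachIn E S u w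

/-- `C` is a `k`-vertex-connected vertex set: `|C| ≥ k+1` and removing any fewer than `k`
vertices leaves the induced subgraph strongly connected. -/
def IsKVCSet (E : V → V → Prop) (k : ℕ) (C : Set V) : Prop :=
  k + 1 ≤ C.ncard ∧ ∀ Y ⊆ C, Y.ncard < k → SCOn E (C \ Y)

/-- `C` is a `2`-vertex-connected vertex set. -/
def IsTwoVCSet (E : V → V → Prop) (C : Set V) : Prop :=
  3 ≤ C.ncard ∧ ∀ w ∈ C, SCOn E (C \ {w})

/-- A `2`-vertex-connected component: a maximal `2`-vertex-connected vertex set. -/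
def IsTwoVCC (E : V → V → Prop) (C : Set V) : Prop :=
  IsTwoVCSet E C ∧ ∀ D, IsTwoVCSet E D → C ⊆ D → D = C

/-- A `k`-vertex-connected component: a maximal `k`-vertex-connected vertex set. -/
def IsKVCC (E : V → V → Prop) (k : ℕ) (C : Set V) : Prop :=
  IsKVCSet E k C ∧ ∀ D, IsKVCSet E k D → C ⊆ D → D = C

/-- `C` is a strongly connected component of the induced subgraph on `S`. -/
def IsSCCOn (E : V → V → Prop) (S C : Set V) : Prop :=
  C ⊆ S ∧ C.Nonempty ∧ (∀ u ∈ C, ∀ w ∈ C, ReachIn E S u w) ∧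
    ∀ D, C ⊆ D → D ⊆ S → (∀ u ∈ D, ∀ w ∈ D, ReachIn E S u w) → D = C

/-- `p` is a (directed) walk from `u` to `w`, given as the list of its vertices. -/
def IsWalk (E : V → V → Prop) (u w : V) (p : List V) : Prop :=
  p.head? = some u ∧ p.getLast? = some w ∧ p.Chain' E

/-- `p` is a (directed, simple) path from `u` to `w`. -/
def IsPath (E : V → V → Prop) (u w : V) (p : List V) : Prop :=
  IsWalk E u w p ∧ p.Nodup

/-- In the flowgraph with start vertex `v`, vertex `u` dominates vertex `x`:
every walk from `v` to `x` contains `u`. -/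
def Dominates (E : V → V → Prop) (v u x : V) : Prop :=
  ∀ p, IsWalk E v x p → u ∈ p

/-- `u` is a non-trivial dominator in the flowgraph with start vertex `v`. -/
def NontrivDom (E : V → V → Prop) (v u : V) : Prop :=
  ∃ x, x ≠ v ∧ x ≠ u ∧ Dominates E v u x

/-- `u` is the immediate dominator of `x` in the flowgraph with start vertex `v`:
`u` is a dominator of `x` other than `x`, and every dominator of `x` other than `x`
dominates `u`.  Equivalently, `x` is a child of `u` in the dominator tree. -/
def IsImd (E : V → V → Prop) (v u x : V) : Prop :=
  Dominates E v u x ∧ u ≠ x ∧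
    ∀ d, Dominates E v d x → d ≠ x → Dominates E v d u

/-- `w` is a strong articulation point of the digraph `E`: its removal increases the
number of strongly connected components, i.e. some two vertices `u, x ≠ w` lie in a
common strongly connected component of `E` but not of `E` with `w` removed. -/
def IsSAP (E : V → V → Prop) (w : V) : Prop :=
  ∃ u x : V, u ≠ w ∧ x ≠ w ∧ ReachIn E Set.univ u x ∧ ReachIn E Set.univ x u ∧
    ¬(ReachIn E ({w} : Set V)ᶜ u x ∧ ReachIn E ({w} : Set V)ᶜ x u)

lemma reachIn_mono {E : V → V → Prop} {S T : Set V} (h : S ⊆ T) {a b : V}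
    (hr : ReachIn E S a b) : ReachIn E T a b :=
  Relation.ReflTransGen.mono (fun x y hxy => ⟨h hxy.1, h hxy.2.1, hxy.2.2⟩) _ _ hr

/-- If `w` is a strong articulation point of `G`, then every 2-vertex-connected
component of `G` is contained in `D ∪ {w}` for some strongly connected component `D` of
`G \ {w}`. -/
theorem stmt18 [Fintype V] (E : V → V → Prop) (w : V) (hw : IsSAP E w)
    (C : Set V) (hC : IsTwoVCC E C) :
    ∃ D, IsSCCOn E (({w} : Set V)ᶜ) D ∧ C ⊆ D ∪ {w} := by
  classical
  obtain ⟨⟨hcard, hsc⟩, _hmax⟩ := hC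
  have hsub : C \ {w} ⊆ ({w} : Set V)ᶜ := fun y hy => hy.2
  -- mutual reachability in {w}ᶜ among C \ {w}
  have key : ∀ u ∈ C \ {w}, ∀ x ∈ C \ {w}, ReachIn E (({w} : Set V)ᶜ) u x := by
    intro u hu x hx
    by_cases hwC : w ∈ C
    · exact reachIn_mono hsub (hsc w hwC u hu x hx)
    · obtain ⟨w₀, hw₀C, hw₀⟩ := Set.exists_mem_notMem_of_ncard_lt_ncard
        (s := ({u, x} : Set V)) (t := C)
        (lt_of_le_of_lt (Set.ncard_insert_le _ _)
          (by simpa using lt_of_lt_of_le (by norm_num) hcard))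
      have hsub' : C \ {w₀} ⊆ ({w} : Set V)ᶜ := by
        intro y hy hyw
        exact hwC (by simpa [Set.mem_singleton_iff.mp hyw] using hy.1)
      refine reachIn_mono hsub' (hsc w₀ hw₀C u ⟨hu.1, ?_⟩ x ⟨hx.1, ?_⟩)
      · simp only [Set.mem_singleton_iff]
        rintro rfl; exact hw₀ (by simp)
      · simp only [Set.mem_singleton_iff]
        rintro rfl; exact hw₀ (by simp)
  -- C \ {w} is nonempty
  obtain ⟨s, hsC, hsw⟩ := Set.exists_mem_notMem_of_ncard_lt_ncard
    (s := ({w} : Set V)) (t := C)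
    (by simpa using lt_of_lt_of_le (by norm_num) hcard)
  have hs : s ∈ C \ {w} := ⟨hsC, hsw⟩
  set D : Set V := {x | x ∈ ({w} : Set V)ᶜ ∧ ReachIn E (({w} : Set V)ᶜ) s x ∧
    ReachIn E (({w} : Set V)ᶜ) x s} with hD
  have hsD : s ∈ D := ⟨fun h => hsw h, Relation.ReflTransGen.refl, Relation.ReflTransGen.refl⟩
  refine ⟨D, ⟨fun x hx => hx.1, ⟨s, hsD⟩, ?_, ?_⟩, ?_⟩
  · intro u hu x hx
    exact hu.2.2.trans hx.2.1
  · intro D' hDD' hD'sub hD'reach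
    apply Set.Subset.antisymm _ hDD'
    intro x hx
    exact ⟨hD'sub hx, hD'reach s (hDD' hsD) x hx, hD'reach x hx s (hDD' hsD)⟩
  · intro c hc
    by_cases hcw : c = w
    · right; simp [hcw]
    · left
      have hc' : c ∈ C \ {w} := ⟨hc, hcw⟩
      exact ⟨hcw, key s hs c hc', key c hc' s hs⟩
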